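/- For φ₁(t) = min(1, t) and ς ∈ (0,∞), the convex envelope of h_ς^{(1)}(t) := inf_{τ>0}{ φ₁(1/τ)·t² + (ς²/4)·τ } equals t² for 0 ≤ t ≤ ς/2 and ς·t − ς²/4 for t ≥ ς/2. -/

import Mathlib

open Set Filter Topology

/-- `hS φ ς t = inf_{τ>0} { φ(1/τ)·t² + (ς²/4)·τ }`. -/
noncomputable def hS (φ : ℝ → ℝ) (ς t : ℝ) : ℝ :=
  sInf {y : ℝ | ∃ τ : ℝ, 0 < τ ∧ y = φ (1/τ) * t^2 + ς^2/4 * τ}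

/-- The convex lower envelope of `f` on `[0,∞)`. -/
noncomputable def convEnv (f : ℝ → ℝ) (t : ℝ) : ℝ :=
  sSup {y : ℝ | ∃ g : ℝ → ℝ, ConvexOn ℝ (Ici 0) g ∧ (∀ s ∈ Ici (0:ℝ), g s ≤ f s) ∧ y = g t}

/-! For `τ ≤ 1` the quantity under the infimum is `t² + ς²τ/4`, so `h ≤ t²`, and `τ = 2t/ς`
gives `h(t) ≤ ςt` for `t ≥ ς/2`. Conversely, by AM–GM (`t²/τ + ς²τ/4 ≥ ςt`) every tangent line
`s ↦ 2x₀s − x₀²` of `s²` with `2x₀ ≤ ς` lies below `h`; the tangent at `t` (for `t ≤ ς/2`) or at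
`ς/2` (for `t ≥ ς/2`) is the largest convex minorant at `t`. In the second case a convex minorant
is at most `ς²/4` at `ς/2` and stays below the line `ςs`, so its slope beyond `ς/2` is at most `ς`. -/
theorem convexOn_mul_add {s : Set ℝ} (hs : Convex ℝ s) (a c : ℝ) :
    ConvexOn ℝ s (fun x => a * x + c) :=
  ((LinearMap.mul ℝ ℝ a).convexOn hs).add_const c

theorem convEnv_eq_of_forall_le {f g₀ : ℝ → ℝ} {t : ℝ} (hg₀ : ConvexOn ℝ (Ici 0) g₀)
    (hg₀f : ∀ s ∈ Ici (0 : ℝ), g₀ s ≤ f s)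
    (hmax : ∀ g : ℝ → ℝ, ConvexOn ℝ (Ici 0) g → (∀ s ∈ Ici (0 : ℝ), g s ≤ f s) → g t ≤ g₀ t) :
    convEnv f t = g₀ t :=
  IsGreatest.csSup_eq ⟨⟨g₀, hg₀, hg₀f, rfl⟩, by rintro _ ⟨g, hg, hgf, rfl⟩; exact hmax g hg hgf⟩

theorem ConvexOn.le_add_mul_sub_of_le_affine {g : ℝ → ℝ} {x₀ t a C : ℝ}
    (hg : ConvexOn ℝ (Ici x₀) g) (hC : ∀ b ∈ Ici x₀, g b ≤ a * b + C) (ht : x₀ ≤ t) :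
    g t ≤ g x₀ + a * (t - x₀) := by
  rcases ht.eq_or_lt with rfl | ht
  · simp
  by_contra! hlt
  set m := (g t - g x₀) / (t - x₀) with hm
  have hma : 0 < m - a := by
    rw [sub_pos, hm, lt_div_iff₀ (sub_pos.2 ht)]
    linarith
  have hgrowth : ∀ b, t < b → g x₀ + m * (b - x₀) ≤ g b := by
    intro b hb
    have := hg.secant_mono_aux2 self_mem_Ici (mem_Ici.2 (ht.trans hb).le) ht hb
    rw [le_div_iff₀ (by linarith)] at this
    linarith
  set K := C + a * x₀ - g x₀
  set b := max (t + 1) (x₀ + K / (m - a) + 1)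
  have hbt : t < b := (lt_add_one t).trans_le (le_max_left _ _)
  have hbK : K / (m - a) + 1 ≤ b - x₀ := by linarith [le_max_right (t + 1) (x₀ + K / (m - a) + 1)]
  have hKb : K < (m - a) * (b - x₀) := by
    calc K < (m - a) * (K / (m - a) + 1) := by field_simp; linarith
      _ ≤ (m - a) * (b - x₀) := by gcongr
  linarith [hgrowth b hbt, hC b (mem_Ici.2 (by linarith))]

theorem hS_le {φ : ℝ → ℝ} (hφ : ∀ x, 0 < x → 0 ≤ φ x) (ς t : ℝ) {τ : ℝ} (hτ : 0 < τ) :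
    hS φ ς t ≤ φ (1 / τ) * t ^ 2 + ς ^ 2 / 4 * τ := by
  refine csInf_le ⟨0, ?_⟩ ⟨τ, hτ, rfl⟩
  rintro _ ⟨σ, hσ, rfl⟩
  have := hφ (1 / σ) (by positivity)
  positivity

theorem le_hS {φ : ℝ → ℝ} {ς t y : ℝ} (h : ∀ τ, 0 < τ → y ≤ φ (1 / τ) * t ^ 2 + ς ^ 2 / 4 * τ) :
    y ≤ hS φ ς t :=
  le_csInf ⟨_, 1, one_pos, rfl⟩ (by rintro _ ⟨τ, hτ, rfl⟩; exact h τ hτ)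

theorem min_one_nonneg (x : ℝ) (hx : 0 < x) : 0 ≤ min 1 x := le_min zero_le_one hx.le

theorem hS_min_one_le_sq (ς t : ℝ) : hS (fun s => min 1 s) ς t ≤ t ^ 2 := by
  have hlim : Tendsto (fun τ : ℝ => t ^ 2 + ς ^ 2 / 4 * τ) (𝓝[>] 0) (𝓝 (t ^ 2)) := by
    have : Tendsto (fun τ : ℝ => t ^ 2 + ς ^ 2 / 4 * τ) (𝓝 0) (𝓝 (t ^ 2 + ς ^ 2 / 4 * 0)) :=
      (continuous_const.add (continuous_const.mul continuous_id)).tendsto 0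
    simpa using this.mono_left nhdsWithin_le_nhds
  refine ge_of_tendsto hlim ?_
  filter_upwards [Ioo_mem_nhdsGT one_pos] with τ ⟨hτ, hτ1⟩
  have hmin : min 1 (1 / τ) = 1 := min_eq_left (by rw [le_div_iff₀ hτ]; linarith)
  simpa only [hmin, one_mul] using hS_le (φ := fun s => min 1 s) min_one_nonneg ς t hτ

theorem hS_min_one_le_mul {ς b : ℝ} (hς : 0 < ς) (hb : ς / 2 ≤ b) :
    hS (fun s => min 1 s) ς b ≤ ς * b := by
  have hb0 : 0 < b := by linarith
  have hmin : min 1 (1 / (2 * b / ς)) = ς / (2 * b) := by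
    rw [one_div_div]
    exact min_eq_right (by rw [div_le_one (by positivity)]; linarith)
  refine (hS_le min_one_nonneg ς b (by positivity : 0 < 2 * b / ς)).trans_eq ?_
  rw [hmin]
  field_simp
  ring

theorem two_mul_sub_sq_le_hS_min_one {ς x₀ s : ℝ} (hx₀ : 2 * x₀ ≤ ς) (hs : 0 ≤ s) :
    2 * x₀ * s - x₀ ^ 2 ≤ hS (fun s => min 1 s) ς s := by
  refine le_hS fun τ hτ => ?_
  rcases le_total τ 1 with hτ1 | hτ1
  · have hmin : min 1 (1 / τ) = 1 := min_eq_left (by rw [le_div_iff₀ hτ]; linarith)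
    rw [hmin]
    nlinarith [sq_nonneg (s - x₀), sq_nonneg ς]
  · have hmin : min 1 (1 / τ) = 1 / τ := min_eq_right (by rw [div_le_one hτ]; linarith)
    have hamgm : ς * s ≤ 1 / τ * s ^ 2 + ς ^ 2 / 4 * τ := by
      have hsq : 0 ≤ (s - ς * τ / 2) ^ 2 / τ := by positivity
      have : (s - ς * τ / 2) ^ 2 / τ = 1 / τ * s ^ 2 + ς ^ 2 / 4 * τ - ς * s := by
        field_simp; ring
      linarith
    rw [hmin]
    nlinarith [sq_nonneg x₀]

/-- For `φ₁(t) = min(1,t)`, the convex envelope of `h_ς^{(1)}` equals `t²` for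
`0 ≤ t ≤ ς/2` and `ςt − ς²/4` for `t ≥ ς/2`. -/
theorem stmt11 (ς : ℝ) (hς : 0 < ς) :
    (∀ t : ℝ, 0 ≤ t → t ≤ ς/2 → convEnv (hS (fun s => min 1 s) ς) t = t^2) ∧
    (∀ t : ℝ, ς/2 ≤ t → convEnv (hS (fun s => min 1 s) ς) t = ς*t - ς^2/4) := by
  have tangent_le (x₀ : ℝ) (hx₀ : 2 * x₀ ≤ ς) (s : ℝ) (hs : s ∈ Ici (0 : ℝ)) :=
    two_mul_sub_sq_le_hS_min_one hx₀ hs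
  constructor
  · intro t ht0 htς
    rw [convEnv_eq_of_forall_le (convexOn_mul_add (convex_Ici 0) (2 * t) (-t ^ 2))
      (tangent_le t (by linarith)) fun g _ hgf => ?_]
    · ring
    · calc g t ≤ t ^ 2 := (hgf t ht0).trans (hS_min_one_le_sq ς t)
        _ = 2 * t * t + -t ^ 2 := by ring
  · intro t ht
    rw [convEnv_eq_of_forall_le (convexOn_mul_add (convex_Ici 0) (2 * (ς / 2)) (-(ς / 2) ^ 2))
      (tangent_le (ς / 2) (by ring_nf; rfl)) fun g hg hgf => ?_]
    · ring
    · have hς2 : (0 : ℝ) ≤ ς / 2 := by positivity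
      have hmid : g (ς / 2) ≤ (ς / 2) ^ 2 := (hgf _ hς2).trans (hS_min_one_le_sq ς _)
      have hslope := (hg.subset (Ici_subset_Ici.2 hς2) (convex_Ici _)).le_add_mul_sub_of_le_affine
        (fun b hb => ((hgf b (hς2.trans hb)).trans (hS_min_one_le_mul hς hb)).trans_eq
          (add_zero _).symm) ht
      linarith
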